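/- arXiv:2510.04808 — 2 statements merged into one kernel-verified Lean document; each statement's English description precedes it below -/
import Mathlib

section
/- Let (X, F, μ) be a finite atomless measure space and ν a finite signed measure on (X, F) absolutely continuous with respect to μ. Then for every measurable set Ξ there exists a measurable subset Ξ* ⊆ Ξ with ν(Ξ*) = ν(Ξ)/2. -/
open MeasureTheory Set
open scoped ENNReal NNReal

namespace HalmosBisect

variable {X : Type*} [MeasurableSpace X]

/-- From the splitting property we can find arbitrarily small pieces of positive measure. -/
lemma small_piece (p : Measure X)
    (hsplit : ∀ s, MeasurableSet s → 0 < p s →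
      ∃ t, MeasurableSet t ∧ t ⊆ s ∧ 0 < p t ∧ p t < p s)
    {s : Set X} (hs : MeasurableSet s) (hps : 0 < p s) (hfin : p s ≠ ⊤)
    {ε : ℝ≥0∞} (hε : 0 < ε) :
    ∃ t, MeasurableSet t ∧ t ⊆ s ∧ 0 < p t ∧ p t ≤ ε := by
  have key : ∀ k : ℕ, ∃ t, MeasurableSet t ∧ t ⊆ s ∧ 0 < p t ∧ p t ≤ p s / 2 ^ k := by
    intro k
    induction k with
    | zero => exact ⟨s, hs, subset_rfl, hps, by simp⟩
    | succ k ih =>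
      obtain ⟨t, ht, hts, hpt, hle⟩ := ih
      obtain ⟨u, hu, hut, hpu, hpu'⟩ := hsplit t ht hpt
      have hsum : p (t \ u) + p u = p t := by
        have := measure_diff_add_inter (μ := p) t hu
        rwa [inter_eq_self_of_subset_right hut] at this
      have hstep : p s / 2 ^ k / 2 = p s / 2 ^ (k + 1) := by
        rw [pow_succ, div_eq_mul_inv, div_eq_mul_inv, div_eq_mul_inv, mul_assoc,
          ENNReal.mul_inv (Or.inl (by positivity)) (Or.inl (by simp))]
      by_cases hc : p u ≤ p t / 2
      · exact ⟨u, hu, hut.trans hts, hpu,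
          hc.trans ((ENNReal.div_le_div_right hle 2).trans hstep.le)⟩
      · push_neg at hc
        have hdu : p (t \ u) ≤ p t / 2 := by
          by_contra hcon
          push_neg at hcon
          have : p t < p t := by
            calc p t = p t / 2 + p t / 2 := (ENNReal.add_halves _).symm
            _ < p (t \ u) + p u := ENNReal.add_lt_add hcon hc
            _ = p t := hsum
          exact lt_irrefl _ this
        have hpd : 0 < p (t \ u) := by
          by_contra hz
          push_neg at hz
          have : p (t \ u) = 0 := le_antisymm hz zero_le
          rw [this, zero_add] at hsum
          exact absurd hsum.symm.le (not_le.2 hpu')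
        exact ⟨t \ u, ht.diff hu, diff_subset.trans hts, hpd,
          hdu.trans ((ENNReal.div_le_div_right hle 2).trans hstep.le)⟩
  rcases eq_or_ne ε ⊤ with rfl | hεtop
  · obtain ⟨t, ht, hts, hpt, _⟩ := key 0
    exact ⟨t, ht, hts, hpt, le_top⟩
  · obtain ⟨n, hn⟩ := ENNReal.exists_nat_gt (ENNReal.div_lt_top hfin hε.ne').ne
    have hn2 : p s / ε < 2 ^ n := by
      calc p s / ε < (n : ℝ≥0∞) := hn
      _ ≤ 2 ^ n := by
          exact_mod_cast Nat.cast_le.2 (Nat.lt_two_pow_self (n := n)).le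
    have hlt : p s / 2 ^ n < ε := by
      rw [ENNReal.div_lt_iff (Or.inl (by positivity)) (Or.inl (by simp))]
      rw [ENNReal.div_lt_iff (Or.inl hε.ne') (Or.inl hεtop)] at hn2
      rwa [mul_comm]
    obtain ⟨t, ht, hts, hpt, hle⟩ := key n
    exact ⟨t, ht, hts, hpt, hle.trans hlt.le⟩


/-- Absolute continuity transfers the splitting (atomless) property. -/
lemma split_of_ac (μ p : Measure X) [IsFiniteMeasure μ] [IsFiniteMeasure p]
    (hatomless : ∀ s, MeasurableSet s → 0 < μ s →
      ∃ t, MeasurableSet t ∧ t ⊆ s ∧ 0 < μ t ∧ μ t < μ s)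
    (hac : ∀ s, MeasurableSet s → μ s = 0 → p s = 0) :
    ∀ s, MeasurableSet s → 0 < p s →
      ∃ t, MeasurableSet t ∧ t ⊆ s ∧ 0 < p t ∧ p t < p s := by
  intro s hs hps
  by_contra hcon
  push_neg at hcon
  have hdich : ∀ t, MeasurableSet t → t ⊆ s → p t = 0 ∨ p t = p s := by
    intro t ht hts
    rcases eq_or_lt_of_le (show 0 ≤ p t from zero_le) with h | h
    · exact Or.inl h.symm
    · exact Or.inr (le_antisymm (measure_mono hts) (hcon t ht hts h))
  set F : Set (Set X) := {u | MeasurableSet u ∧ u ⊆ s ∧ p u = p s} with hF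
  have hsF : s ∈ F := ⟨hs, subset_rfl, rfl⟩
  set m : ℝ≥0∞ := sInf (μ '' F) with hm
  have hmle : m ≤ μ s := sInf_le ⟨s, hsF, rfl⟩
  have hmtop : m ≠ ⊤ := (hmle.trans_lt (measure_lt_top μ s)).ne
  have hex : ∀ n : ℕ, ∃ v ∈ F, μ v < m + (↑(n + 1) : ℝ≥0∞)⁻¹ := by
    intro n
    have hlt : m < m + (↑(n + 1) : ℝ≥0∞)⁻¹ :=
      ENNReal.lt_add_right hmtop (by simp)
    obtain ⟨x, ⟨v, hv, rfl⟩, hxlt⟩ := sInf_lt_iff.mp (hm ▸ hlt)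
    exact ⟨v, hv, hxlt⟩
  choose u huF huμ using hex
  -- partial intersections
  set v : ℕ → Set X := fun n => ⋂ k ≤ n, u k with hv
  have hinterF : ∀ a b, a ∈ F → b ∈ F → a ∩ b ∈ F := by
    rintro a b ⟨ha, has, hpa⟩ ⟨hb, hbs, hpb⟩
    refine ⟨ha.inter hb, inter_subset_left.trans has, ?_⟩
    have hkey := measure_union_add_inter (μ := p) a hb
    rw [hpa, hpb] at hkey
    have hle1 : p (a ∪ b) ≤ p s := measure_mono (union_subset has hbs)
    have hge : p s ≤ p (a ∩ b) := by
      by_contra hcc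
      push_neg at hcc
      have : p (a ∪ b) + p (a ∩ b) < p s + p s :=
        ENNReal.add_lt_add_of_le_of_lt (measure_ne_top p _) hle1 hcc
      rw [hkey] at this
      exact lt_irrefl _ this
    exact le_antisymm (measure_mono (inter_subset_left.trans has)) hge
  have hvF : ∀ n, v n ∈ F := by
    intro n
    induction n with
    | zero => simpa [hv, Set.iInter_iInter_eq_left, Nat.le_zero] using huF 0
    | succ n ih =>
      have hveq : v (n + 1) = v n ∩ u (n + 1) := by
        simp only [hv]
        ext x
        simp only [Set.mem_iInter, Set.mem_inter_iff]
        constructor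
        · intro h
          exact ⟨fun k hk => h k (hk.trans (Nat.le_succ n)), h (n + 1) le_rfl⟩
        · rintro ⟨h1, h2⟩ k hk
          rcases Nat.lt_succ_iff_lt_or_eq.mp (Nat.lt_succ_of_le hk) with h | h
          · exact h1 k (Nat.lt_succ_iff.mp h)
          · subst h; exact h2
      rw [hveq]
      exact hinterF _ _ ih (huF (n + 1))
  have hvmeas : ∀ n, MeasurableSet (v n) := fun n => (hvF n).1
  have hvanti : Antitone v := fun a b hab =>
    Set.biInter_mono (fun k (hk : k ≤ a) => hk.trans hab) (fun k _ => subset_rfl)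
  set w : Set X := ⋂ n, v n with hw
  have hwmeas : MeasurableSet w := MeasurableSet.iInter hvmeas
  have hws : w ⊆ s := (Set.iInter_subset v 0).trans (hvF 0).2.1
  have hpw : p w = p s := by
    rw [hw, Antitone.measure_iInter hvanti (fun n => (hvmeas n).nullMeasurableSet)
      ⟨0, measure_ne_top p _⟩]
    simp [fun n => (hvF n).2.2]
  have hwF : w ∈ F := ⟨hwmeas, hws, hpw⟩
  have hmw : m ≤ μ w := sInf_le ⟨w, hwF, rfl⟩
  have hwm : μ w ≤ m := by
    refine ENNReal.le_of_forall_pos_le_add fun ε hε _ => ?_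
    obtain ⟨n, hn⟩ := ENNReal.exists_inv_nat_lt (a := (ε : ℝ≥0∞)) (by exact_mod_cast hε.ne')
    have h1 : μ w ≤ μ (u n) := by
      refine measure_mono ?_
      exact (Set.iInter_subset v n).trans (Set.biInter_subset_of_mem (show n ≤ n from le_rfl))
    have h2 : ((n : ℝ≥0∞) + 1)⁻¹ ≤ (n : ℝ≥0∞)⁻¹ :=
      ENNReal.inv_le_inv.mpr (le_add_of_nonneg_right zero_le)
    calc μ w ≤ μ (u n) := h1
    _ ≤ m + (↑(n + 1) : ℝ≥0∞)⁻¹ := (huμ n).le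
    _ ≤ m + (n : ℝ≥0∞)⁻¹ := by push_cast; exact add_le_add_right h2 m
    _ ≤ m + ε := add_le_add_right hn.le m
  have hμw : μ w = m := le_antisymm hwm hmw
  have hm0 : m ≠ 0 := by
    intro h0
    have : p w = 0 := hac w hwmeas (hμw.trans h0)
    rw [hpw] at this
    exact hps.ne' this
  obtain ⟨t, ht, htw, hμt, hμt'⟩ := hatomless w hwmeas (hμw ▸ pos_iff_ne_zero.mpr hm0)
  rcases hdich t ht (htw.trans hws) with hpt | hpt
  · -- p t = 0, so w \ t ∈ F but μ (w \ t) < m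
    have hsum : p (w \ t) + p (w ∩ t) = p w := measure_diff_add_inter (μ := p) w ht
    have hpwt : p (w \ t) = p s := by
      have h1 : p (w ∩ t) = 0 :=
        le_antisymm (le_trans (measure_mono Set.inter_subset_right) hpt.le) zero_le
      rw [h1, add_zero] at hsum
      rw [hsum, hpw]
    have hmem : w \ t ∈ F := ⟨hwmeas.diff ht, diff_subset.trans hws, hpwt⟩
    have h2 : m ≤ μ (w \ t) := sInf_le ⟨_, hmem, rfl⟩
    have hsum2 : μ (w \ t) + μ (w ∩ t) = μ w := measure_diff_add_inter (μ := μ) w ht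
    rw [inter_eq_self_of_subset_right htw] at hsum2
    have : m < m := by
      calc m = μ w := hμw.symm
      _ = μ (w \ t) + μ t := hsum2.symm
      _ ≥ m + μ t := add_le_add_left h2 _
      _ > m := ENNReal.lt_add_right hmtop hμt.ne'
    exact lt_irrefl _ this
  · -- p t = p s, so t ∈ F but μ t < m
    have hmem : t ∈ F := ⟨ht, htw.trans hws, hpt⟩
    have : m ≤ μ t := sInf_le ⟨_, hmem, rfl⟩
    rw [hμw] at hμt'
    exact absurd hμt' (not_lt.mpr this)


/-- Sierpiński: an atomless (splitting) finite measure takes every intermediate value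
on subsets of a given measurable set. -/
lemma sierpinski (p : Measure X) [IsFiniteMeasure p]
    (hsplit : ∀ s, MeasurableSet s → 0 < p s →
      ∃ t, MeasurableSet t ∧ t ⊆ s ∧ 0 < p t ∧ p t < p s)
    {s : Set X} (hs : MeasurableSet s) {c : ℝ≥0∞} (hc : c ≤ p s) :
    ∃ t, MeasurableSet t ∧ t ⊆ s ∧ p t = c := by
  have hcfin : c ≠ ⊤ := (hc.trans_lt (measure_lt_top p s)).ne
  have step : ∀ t : Set X, MeasurableSet t → t ⊆ s → p t ≤ c →
      ∃ t', MeasurableSet t' ∧ t' ⊆ s ∧ p t' ≤ c ∧ t ⊆ t' ∧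
        ∀ u, MeasurableSet u → u ⊆ s \ t → p t + p u ≤ c → p t + p u / 2 ≤ p t' := by
    intro t ht hts hptc
    set D : Set (Set X) := {u | MeasurableSet u ∧ u ⊆ s \ t ∧ p t + p u ≤ c} with hD
    set δ : ℝ≥0∞ := ⨆ u ∈ D, p u with hδdef
    by_cases hδ : δ = 0
    · refine ⟨t, ht, hts, hptc, subset_rfl, fun u hu hus hptu => ?_⟩
      have hpu : p u ≤ δ := le_biSup _ (show u ∈ D from ⟨hu, hus, hptu⟩)
      rw [hδ] at hpu
      have : p u = 0 := le_antisymm hpu zero_le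
      simp [this]
    · have hδc : δ ≤ c := by
        refine iSup₂_le fun u hu => ?_
        exact le_trans le_add_self hu.2.2
      have hδtop : δ ≠ ⊤ := (hδc.trans_lt (lt_of_le_of_ne le_top hcfin)).ne
      have h2 : δ / 2 < δ := ENNReal.half_lt_self hδ hδtop
      obtain ⟨u, huD, hu2⟩ : ∃ u ∈ D, δ / 2 < p u := by
        have h3 : δ / 2 < ⨆ u ∈ D, p u := by rw [← hδdef]; exact h2
        simp only [lt_iSup_iff] at h3
        obtain ⟨u, huD, hu2⟩ := h3
        exact ⟨u, huD, hu2⟩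
      have hdisj : Disjoint t u := Set.disjoint_sdiff_right.mono_right huD.2.1
      have hunion : p (t ∪ u) = p t + p u := measure_union hdisj huD.1
      refine ⟨t ∪ u, ht.union huD.1, union_subset hts (huD.2.1.trans diff_subset), ?_,
        subset_union_left, ?_⟩
      · rw [hunion]; exact huD.2.2
      · intro w hw hws hptw
        have hwδ : p w ≤ δ := le_biSup _ (show w ∈ D from ⟨hw, hws, hptw⟩)
        have : p w / 2 ≤ p u := le_trans (ENNReal.div_le_div_right hwδ 2) hu2.le
        rw [hunion]
        exact add_le_add_right this (p t)
  choose! F hF₁ hF₂ hF₃ hF₄ hF₅ using step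
  let g : ℕ → {t : Set X // MeasurableSet t ∧ t ⊆ s ∧ p t ≤ c} := fun n =>
    Nat.rec ⟨∅, MeasurableSet.empty, empty_subset s, by simp⟩
      (fun _ tp => ⟨F tp.1, hF₁ tp.1 tp.2.1 tp.2.2.1 tp.2.2.2,
        hF₂ tp.1 tp.2.1 tp.2.2.1 tp.2.2.2, hF₃ tp.1 tp.2.1 tp.2.2.1 tp.2.2.2⟩) n
  have hgsucc : ∀ n, (g (n + 1)).1 = F (g n).1 := fun n => rfl
  have hmono : Monotone fun n => (g n).1 := by
    refine monotone_nat_of_le_succ fun n => ?_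
    rw [hgsucc]
    exact hF₄ (g n).1 (g n).2.1 (g n).2.2.1 (g n).2.2.2
  set T : Set X := ⋃ n, (g n).1 with hT
  have hTmeas : MeasurableSet T := MeasurableSet.iUnion fun n => (g n).2.1
  have hTs : T ⊆ s := iUnion_subset fun n => (g n).2.2.1
  have hpT : p T ≤ c := by
    rw [hT, hmono.measure_iUnion]
    exact iSup_le fun n => (g n).2.2.2
  refine ⟨T, hTmeas, hTs, le_antisymm hpT ?_⟩
  by_contra hlt
  push_neg at hlt
  -- hlt : p T < c
  have hsT : 0 < p (s \ T) := by
    by_contra hz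
    push_neg at hz
    have h0 : p (s \ T) = 0 := le_antisymm hz zero_le
    have : p s ≤ p T := by
      calc p s = p (s \ T) + p (s ∩ T) := (measure_diff_add_inter (μ := p) s hTmeas).symm
      _ = p (s ∩ T) := by rw [h0, zero_add]
      _ ≤ p T := measure_mono inter_subset_right
    exact absurd hc (not_le.mpr (lt_of_le_of_lt this hlt))
  obtain ⟨u, hu, hust, hpu, hpuε⟩ := small_piece p hsplit (hs.diff hTmeas) hsT
    (measure_ne_top p _) (tsub_pos_of_lt hlt)
  have hkey : ∀ n, p (g n).1 + p u ≤ c := by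
    intro n
    have h1 : p (g n).1 ≤ p T := measure_mono (subset_iUnion (fun n => (g n).1) n)
    calc p (g n).1 + p u ≤ p T + (c - p T) := add_le_add h1 hpuε
    _ = c := add_tsub_cancel_of_le hlt.le
  have husub : ∀ n, u ⊆ s \ (g n).1 := fun n =>
    hust.trans (diff_subset_diff_right (subset_iUnion (fun n => (g n).1) n))
  have hgrow : ∀ n, p (g n).1 + p u / 2 ≤ p (g (n + 1)).1 := by
    intro n
    rw [hgsucc]
    exact hF₅ (g n).1 (g n).2.1 (g n).2.2.1 (g n).2.2.2 u hu (husub n) (hkey n)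
  have hbound : ∀ n : ℕ, (n : ℝ≥0∞) * (p u / 2) ≤ p (g n).1 := by
    intro n
    induction n with
    | zero => simp
    | succ n ih =>
      calc ((n + 1 : ℕ) : ℝ≥0∞) * (p u / 2) = (n : ℝ≥0∞) * (p u / 2) + p u / 2 := by
            push_cast; ring
      _ ≤ p (g n).1 + p u / 2 := add_le_add_left ih _
      _ ≤ p (g (n + 1)).1 := hgrow n
  have hhalf : p u / 2 ≠ 0 := (ENNReal.half_pos hpu.ne').ne'
  obtain ⟨N, hN⟩ := ENNReal.exists_nat_gt (ENNReal.div_lt_top hcfin hhalf).ne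
  have hNc : c < (N : ℝ≥0∞) * (p u / 2) := by
    have hhalftop : p u / 2 ≠ ⊤ :=
      ((ENNReal.div_le_div_right (hpuε.trans tsub_le_self) 2).trans_lt
        (lt_of_le_of_ne le_top (by simp [ENNReal.div_eq_top, hcfin]))).ne
    rw [ENNReal.div_lt_iff (Or.inl hhalf) (Or.inl hhalftop)] at hN
    exact hN
  have : c < c := lt_of_lt_of_le hNc ((hbound N).trans (g N).2.2.2)
  exact lt_irrefl _ this

end HalmosBisect


open HalmosBisect in
/-- Halmos bisection: if `μ` is a finite atomless measure and `ν` is a finite signed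
measure absolutely continuous w.r.t. `μ`, then every measurable set `Ξ` contains a
measurable subset `Ξ*` with `ν Ξ* = ν Ξ / 2`. -/
theorem stmt_6 {X : Type*} [MeasurableSpace X] (μ : Measure X) [IsFiniteMeasure μ]
    (hatomless : ∀ s, MeasurableSet s → 0 < μ s →
      ∃ t, MeasurableSet t ∧ t ⊆ s ∧ 0 < μ t ∧ μ t < μ s)
    (ν : SignedMeasure X)
    (hac : ∀ s, MeasurableSet s → μ s = 0 → ν s = 0) :
    ∀ Ξ, MeasurableSet Ξ →
      ∃ Ξstar, MeasurableSet Ξstar ∧ Ξstar ⊆ Ξ ∧ ν Ξstar = ν Ξ / 2 := by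
  intro Ξ hΞ
  obtain ⟨i, hi₁, hi₂, hi₃⟩ := ν.exists_compl_positive_negative
  set pm : Measure X := ν.toMeasureOfZeroLE i hi₁ hi₂ with hpm
  set nm : Measure X := ν.toMeasureOfLEZero iᶜ hi₁.compl hi₃ with hnm
  have hpmval : ∀ j, MeasurableSet j → (pm j).toReal = ν (i ∩ j) := by
    intro j hj
    rw [hpm, SignedMeasure.toMeasureOfZeroLE_apply ν hi₂ hi₁ hj]
    simp
  have hnmval : ∀ j, MeasurableSet j → (nm j).toReal = -ν (iᶜ ∩ j) := by
    intro j hj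
    rw [hnm, SignedMeasure.toMeasureOfLEZero_apply ν hi₃ hi₁.compl hj]
    simp
  have hacp : ∀ j, MeasurableSet j → μ j = 0 → pm j = 0 := by
    intro j hj hμj
    have h0 : ν (i ∩ j) = 0 :=
      hac _ (hi₁.inter hj) (le_antisymm (le_trans (measure_mono inter_subset_right) hμj.le)
        zero_le)
    rw [hpm, SignedMeasure.toMeasureOfZeroLE_apply ν hi₂ hi₁ hj]
    simp [h0]
  have hacn : ∀ j, MeasurableSet j → μ j = 0 → nm j = 0 := by
    intro j hj hμj
    have h0 : ν (iᶜ ∩ j) = 0 :=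
      hac _ (hi₁.compl.inter hj) (le_antisymm (le_trans (measure_mono inter_subset_right) hμj.le)
        zero_le)
    rw [hnm, SignedMeasure.toMeasureOfLEZero_apply ν hi₃ hi₁.compl hj]
    simp [h0]
  have hsplitp := split_of_ac μ pm hatomless hacp
  have hsplitn := split_of_ac μ nm hatomless hacn
  obtain ⟨A, hA, hAsub, hpA⟩ := sierpinski pm hsplitp (hi₁.inter hΞ)
    (ENNReal.half_le_self (a := pm (i ∩ Ξ)))
  obtain ⟨B, hB, hBsub, hnB⟩ := sierpinski nm hsplitn (hi₁.compl.inter hΞ)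
    (ENNReal.half_le_self (a := nm (iᶜ ∩ Ξ)))
  refine ⟨A ∪ B, hA.union hB, union_subset (hAsub.trans inter_subset_right)
    (hBsub.trans inter_subset_right), ?_⟩
  have hdisj : Disjoint A B := Disjoint.mono (hAsub.trans inter_subset_left)
    (hBsub.trans inter_subset_left) disjoint_compl_right
  have hAi : i ∩ A = A := inter_eq_self_of_subset_right (hAsub.trans inter_subset_left)
  have hBi : iᶜ ∩ B = B := inter_eq_self_of_subset_right (hBsub.trans inter_subset_left)
  have hiΞ : i ∩ (i ∩ Ξ) = i ∩ Ξ := by rw [← inter_assoc, inter_self]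
  have hiΞ' : iᶜ ∩ (iᶜ ∩ Ξ) = iᶜ ∩ Ξ := by rw [← inter_assoc, inter_self]
  have hνA : ν A = ν (i ∩ Ξ) / 2 := by
    have h1 : ν A = (pm A).toReal := by rw [hpmval A hA, hAi]
    have h2 : (pm (i ∩ Ξ)).toReal = ν (i ∩ Ξ) := by rw [hpmval _ (hi₁.inter hΞ), hiΞ]
    rw [h1, hpA, ENNReal.toReal_div, h2]
    norm_num
  have hνB : ν B = ν (iᶜ ∩ Ξ) / 2 := by
    have h1 : ν B = -(nm B).toReal := by rw [hnmval B hB, hBi, neg_neg]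
    have h2 : (nm (iᶜ ∩ Ξ)).toReal = -ν (iᶜ ∩ Ξ) := by rw [hnmval _ (hi₁.compl.inter hΞ), hiΞ']
    rw [h1, hnB, ENNReal.toReal_div, h2]
    have : ((2 : ℝ≥0∞)).toReal = 2 := by norm_num
    rw [this]; ring
  have hsplitΞ : ν Ξ = ν (i ∩ Ξ) + ν (iᶜ ∩ Ξ) := by
    have hdisj2 : Disjoint (i ∩ Ξ) (iᶜ ∩ Ξ) :=
      Disjoint.mono inter_subset_left inter_subset_left disjoint_compl_right
    have hun : (i ∩ Ξ) ∪ (iᶜ ∩ Ξ) = Ξ := by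
      rw [← union_inter_distrib_right, union_compl_self, univ_inter]
    have h := ν.of_union hdisj2 (hi₁.inter hΞ) (hi₁.compl.inter hΞ)
    rw [hun] at h
    exact h
  rw [ν.of_union hdisj hA hB, hνA, hνB, hsplitΞ]
  ring
end

section
/- Let Ω be a measurable space, A a compact metric space, ρ a finite measure on Ω, and σ^1, σ^2 stochastic kernels from Ω to A. If ρ({x : σ^1(·|x) ≠ σ^2(·|x)}) > 0, then the measures ρ ⊗ σ^1 and ρ ⊗ σ^2 on Ω × A are distinct. -/
open MeasureTheory ProbabilityTheory

/-- If the set where two stochastic kernels differ has positive `ρ`-measure, then the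
product measures `ρ ⊗ σ¹` and `ρ ⊗ σ²` on `Ω × A` are distinct. -/
theorem stmt_15 {Ω : Type*} [MeasurableSpace Ω] {A : Type*} [MetricSpace A]
    [CompactSpace A] [MeasurableSpace A] [BorelSpace A]
    (ρ : Measure Ω) [IsFiniteMeasure ρ]
    (σ1 σ2 : Kernel Ω A) [IsMarkovKernel σ1] [IsMarkovKernel σ2]
    (h : 0 < ρ {x : Ω | σ1 x ≠ σ2 x}) :
    ρ.compProd σ1 ≠ ρ.compProd σ2 := by
  haveI : PolishSpace A := by infer_instance
  haveI : StandardBorelSpace A := by infer_instance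
  have hΩ : Nonempty Ω := by
    by_contra h'
    haveI : IsEmpty Ω := not_nonempty_iff.mp h'
    rw [Set.eq_empty_of_isEmpty {x : Ω | σ1 x ≠ σ2 x}] at h
    simp at h
  haveI : Nonempty A := by
    by_contra hA
    haveI : IsEmpty A := not_nonempty_iff.mp hA
    have h1 : (σ1 hΩ.some) Set.univ = 1 := measure_univ
    rw [Set.univ_eq_empty_iff.mpr ‹IsEmpty A›] at h1
    simp at h1
  intro heq
  set μ := ρ.compProd σ1 with hμ
  have hfst : μ.fst = ρ := Measure.fst_compProd ρ σ1
  have h1 : ∀ᵐ x ∂ρ, σ1 x = μ.condKernel x := by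
    have := eq_condKernel_of_measure_eq_compProd (ρ := μ) σ1 (by rw [hfst])
    rwa [hfst] at this
  have h2 : ∀ᵐ x ∂ρ, σ2 x = μ.condKernel x := by
    have := eq_condKernel_of_measure_eq_compProd (ρ := μ) σ2 (by rw [hfst]; exact heq)
    rwa [hfst] at this
  have h3 : ∀ᵐ x ∂ρ, σ1 x = σ2 x := by
    filter_upwards [h1, h2] with x hx1 hx2
    rw [hx1, hx2]
  rw [Filter.eventually_iff, mem_ae_iff] at h3
  exact h.ne' (by simpa [Set.compl_setOf] using h3)
end
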